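/- Under the setting of the adaptive constrained Mirror Descent algorithm with stopping condition Σ_{i<N} 1/M_i² ≥ 2Θ₀²/ε², the set I of productive steps (those i < N with g(x^i) ≤ ε) is nonempty. More precisely, since for every non-productive index i ∈ J one has g(x^i) − g(x_*) ≥ g(x^i) > ε, the strict inequality Σ_{i∈I} h_i ( f(x̄^N) − f(x_*) ) < ε Σ_{i∈I} h_i forces I ≠ ∅. -/

import Mathlib

/-!
If no step were productive, every step would be a subgradient step on `g`, and since
`g x⋆ ≤ 0 < ε < g xᵢ` the subgradient inequality gives `ε < ⟪vᵢ, xᵢ - x⋆⟫`.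
The mirror-descent inequality `⟪p, x - y⟫ ≤ V x y - V z y + ‖p‖² / 2` for the minimiser `z` of
`u ↦ ⟪p, u⟫ + V x u` (first-order optimality, the three-point identity of the Bregman divergence,
and Young's inequality against `‖z - x‖² / 2 ≤ V x z`, i.e. strong convexity of `d`) then shows,
for `p = (ε / ‖vᵢ‖²) • vᵢ`, that `V xᵢ x⋆` drops by more than `ε² / (2 ‖vᵢ‖²)` at each step.
Summing over `i < N` gives `ε² / 2 · ∑ 1 / Mᵢ² < V x₀ x⋆ ≤ Θ₀²`, against the stopping rule.
-/

open scoped RealInnerProductSpace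

section Bregman

variable {E : Type*} [NormedAddCommGroup E] [InnerProductSpace ℝ E]

def bregmanDiv (d : E → ℝ) (Gd : E → E) (x y : E) : ℝ := d y - d x - ⟪Gd x, y - x⟫

theorem bregmanDiv_sub_bregmanDiv_sub_bregmanDiv {d : E → ℝ} {Gd : E → E} (x y z : E) :
    bregmanDiv d Gd x y - bregmanDiv d Gd z y - bregmanDiv d Gd x z = ⟪Gd z - Gd x, y - z⟫ := by
  simp only [bregmanDiv, inner_sub_left, inner_sub_right]
  ring

variable [CompleteSpace E]

theorem IsMinOn.inner_gradient_sub_nonneg {φ : E → ℝ} {G : E} {X : Set E} {z y : E}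
    (hmin : IsMinOn φ X z) (hφ : HasGradientAt φ G z) (hX : Convex ℝ X) (hz : z ∈ X)
    (hy : y ∈ X) : 0 ≤ ⟪G, y - z⟫ := by
  simpa using hmin.localize.hasFDerivWithinAt_nonneg hφ.hasFDerivAt.hasFDerivWithinAt
    (sub_mem_posTangentConeAt_of_segment_subset (hX.segment_subset hz hy))

theorem HasGradientAt.hasDerivAt_add_smul {d : E → ℝ} {G x w : E} {t : ℝ}
    (hd : HasGradientAt d G (x + t • w)) :
    HasDerivAt (fun s : ℝ => d (x + s • w)) ⟪G, w⟫ t := by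
  have := hd.hasFDerivAt.comp_hasDerivAt t (((hasDerivAt_id t).smul_const w).const_add x)
  exact this.congr_deriv (by simp)

variable {d : E → ℝ} {Gd : E → E}

theorem hasGradientAt_inner_add_bregmanDiv {z : E} (hd : HasGradientAt d (Gd z) z) (p x : E) :
    HasGradientAt (fun u => ⟪p, u⟫ + bregmanDiv d Gd x u) (p + (Gd z - Gd x)) z := by
  rw [hasGradientAt_iff_hasFDerivAt]
  have := (innerSL ℝ p).hasFDerivAt.add ((hd.hasFDerivAt.sub_const (d x)).sub
    ((innerSL ℝ (Gd x)).hasFDerivAt.comp z ((hasFDerivAt_id z).sub_const x)))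
  refine (this.congr_fderiv ?_).congr_of_eventuallyEq (.of_forall fun u => ?_)
  · ext w; simp
  · simp [bregmanDiv]

theorem bregmanDiv_le_sub_of_isMinOn {X : Set E} {x₀ y : E} (hd : HasGradientAt d (Gd x₀) x₀)
    (hmin : IsMinOn d X x₀) (hX : Convex ℝ X) (hx₀ : x₀ ∈ X) (hy : y ∈ X) :
    bregmanDiv d Gd x₀ y ≤ d y - d x₀ := by
  have := hmin.inner_gradient_sub_nonneg hd hX hx₀ hy
  rw [bregmanDiv]
  linarith

variable {X : Set E}

theorem sq_norm_sub_div_two_le_bregmanDiv (hX : Convex ℝ X)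
    (hd : ∀ u ∈ X, HasGradientAt d (Gd u) u)
    (hstrong : ∀ x ∈ X, ∀ y ∈ X, ‖x - y‖ ^ 2 ≤ ⟪Gd x - Gd y, x - y⟫)
    {x y : E} (hx : x ∈ X) (hy : y ∈ X) :
    ‖y - x‖ ^ 2 / 2 ≤ bregmanDiv d Gd x y := by
  set w := y - x
  have hmem : ∀ t ∈ Set.Icc (0 : ℝ) 1, x + t • w ∈ X := fun t ht => hX.add_smul_sub_mem hx hy ht
  set ψ : ℝ → ℝ := fun t => d (x + t • w) - t * ⟪Gd x, w⟫ - t ^ 2 / 2 * ‖w‖ ^ 2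
  have hψ : ∀ t ∈ Set.Icc (0 : ℝ) 1,
      HasDerivAt ψ (⟪Gd (x + t • w), w⟫ - ⟪Gd x, w⟫ - t * ‖w‖ ^ 2) t := by
    intro t ht
    have := (((hd _ (hmem t ht)).hasDerivAt_add_smul).sub
      ((hasDerivAt_id t).mul_const ⟪Gd x, w⟫)).sub
      (((hasDerivAt_pow 2 t).div_const 2).mul_const (‖w‖ ^ 2))
    exact this.congr_deriv (by ring)
  have hmono : MonotoneOn ψ (Set.Icc 0 1) := by
    refine monotoneOn_of_deriv_nonneg (convex_Icc 0 1)
      (fun t ht => (hψ t ht).continuousAt.continuousWithinAt)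
      (fun t ht => (hψ t (interior_subset ht)).differentiableAt.differentiableWithinAt)
      fun t ht => ?_
    rw [interior_Icc] at ht
    rw [(hψ t (Set.Ioo_subset_Icc_self ht)).deriv]
    -- strong monotonicity between `x + t • w` and `x`, divided by `t > 0`
    have hs := hstrong _ (hmem t (Set.Ioo_subset_Icc_self ht)) x hx
    rw [add_sub_cancel_left, norm_smul, inner_smul_right, inner_sub_left, mul_pow,
      Real.norm_eq_abs, sq_abs, sq] at hs
    nlinarith [ht.1]
  have h01 := hmono (by simp) (by simp) zero_le_one
  simp only [ψ, zero_smul, add_zero, one_smul, w, add_sub_cancel] at h01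
  rw [bregmanDiv]
  linarith

theorem inner_sub_le_bregmanDiv_sub_of_isMinOn (hX : Convex ℝ X)
    (hd : ∀ u ∈ X, HasGradientAt d (Gd u) u)
    (hstrong : ∀ x ∈ X, ∀ y ∈ X, ‖x - y‖ ^ 2 ≤ ⟪Gd x - Gd y, x - y⟫)
    {p x y z : E} (hx : x ∈ X) (hy : y ∈ X) (hz : z ∈ X)
    (hmin : IsMinOn (fun u => ⟪p, u⟫ + bregmanDiv d Gd x u) X z) :
    ⟪p, x - y⟫ ≤ bregmanDiv d Gd x y - bregmanDiv d Gd z y + ‖p‖ ^ 2 / 2 := by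
  have hopt := hmin.inner_gradient_sub_nonneg (hasGradientAt_inner_add_bregmanDiv (hd z hz) p x)
    hX hz hy
  have hthree := bregmanDiv_sub_bregmanDiv_sub_bregmanDiv (d := d) (Gd := Gd) x y z
  have hstrongz := sq_norm_sub_div_two_le_bregmanDiv hX hd hstrong hx hz
  have hyoung : ⟪p, x - z⟫ ≤ ‖p‖ ^ 2 / 2 + ‖z - x‖ ^ 2 / 2 := by
    have := real_inner_le_norm p (x - z)
    rw [norm_sub_rev] at this
    nlinarith [sq_nonneg (‖p‖ - ‖z - x‖)]
  have hsplit : ⟪p, x - y⟫ = ⟪p, x - z⟫ - ⟪p, y - z⟫ := by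
    rw [← inner_sub_right, sub_sub_sub_cancel_right]
  rw [inner_add_left] at hopt
  linarith

theorem sq_div_two_mul_lt_bregmanDiv_sub (hX : Convex ℝ X)
    (hd : ∀ u ∈ X, HasGradientAt d (Gd u) u)
    (hstrong : ∀ x ∈ X, ∀ y ∈ X, ‖x - y‖ ^ 2 ≤ ⟪Gd x - Gd y, x - y⟫)
    {ε : ℝ} (hε : 0 < ε) {v x y z : E} (hv : v ≠ 0) (hgap : ε < ⟪v, x - y⟫)
    (hx : x ∈ X) (hy : y ∈ X) (hz : z ∈ X)
    (hmin : IsMinOn (fun u => ⟪(ε / ‖v‖ ^ 2) • v, u⟫ + bregmanDiv d Gd x u) X z) :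
    ε ^ 2 / 2 * (1 / ‖v‖ ^ 2) < bregmanDiv d Gd x y - bregmanDiv d Gd z y := by
  have hstep := inner_sub_le_bregmanDiv_sub_of_isMinOn hX hd hstrong hx hy hz hmin
  have hv2 : 0 < ‖v‖ ^ 2 := by positivity
  have hgain : ε ^ 2 / ‖v‖ ^ 2 < ⟪(ε / ‖v‖ ^ 2) • v, x - y⟫ := by
    rw [real_inner_smul_left, sq ε, mul_div_right_comm]
    exact mul_lt_mul_of_pos_left hgap (by positivity)
  have hnorm : ‖(ε / ‖v‖ ^ 2) • v‖ ^ 2 = ε ^ 2 / ‖v‖ ^ 2 := by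
    rw [norm_smul, mul_pow, Real.norm_eq_abs, sq_abs, div_pow]
    field_simp
  rw [hnorm] at hstep
  have : ε ^ 2 / 2 * (1 / ‖v‖ ^ 2) = ε ^ 2 / ‖v‖ ^ 2 / 2 := by ring
  linarith

end Bregman

theorem adaptive_md_productive_steps_nonempty_general
    {E : Type*} [NormedAddCommGroup E] [InnerProductSpace ℝ E] [CompleteSpace E]
    (X : Set E) (hXcv : Convex ℝ X)
    (g : E → ℝ)
    (xstar : E) (hxstarX : xstar ∈ X) (hxstarg : g xstar ≤ 0)
    (d : E → ℝ) (Gd : E → E)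
    (hd : ∀ x, HasGradientAt d (Gd x) x)
    (hstrong : ∀ x ∈ X, ∀ y ∈ X, ‖x - y‖ ^ 2 ≤ ⟪Gd x - Gd y, x - y⟫)
    (V : E → E → ℝ) (hV : ∀ x y, V x y = d y - d x - ⟪Gd x, y - x⟫)
    (Θ₀ : ℝ) (hΘpos : 0 < Θ₀) (hΘ : d xstar ≤ Θ₀ ^ 2)
    (ε : ℝ) (hε : 0 < ε) (N : ℕ)
    (x : ℕ → E) (hxX : ∀ i, x i ∈ X)
    (hx0 : IsMinOn d X (x 0)) (hd0 : 0 ≤ d (x 0))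
    (v : ℕ → E) (M h : ℕ → ℝ)
    (hM : ∀ i, M i = ‖v i‖) (hh : ∀ i, h i = ε / M i ^ 2)
    (hvne : ∀ i < N, v i ≠ 0)
    (hnonprod : ∀ i < N, ε < g (x i) → ∀ y ∈ X, g (x i) + ⟪v i, y - x i⟫ ≤ g y)
    (hstep : ∀ i < N,
      IsMinOn (fun u => ⟪h i • v i, u⟫ + V (x i) u) X (x (i + 1)))
    (hstop : 2 * Θ₀ ^ 2 / ε ^ 2 ≤ ∑ i ∈ Finset.range N, 1 / M i ^ 2) :
    ((Finset.range N).filter fun i => g (x i) ≤ ε).Nonempty := by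
  by_contra hI
  have hJ : ∀ i < N, ε < g (x i) := fun i hi => not_le.1 fun hi' =>
    hI ⟨i, Finset.mem_filter.2 ⟨Finset.mem_range.2 hi, hi'⟩⟩
  have hN : (Finset.range N).Nonempty := by
    rw [Finset.nonempty_range_iff]
    rintro rfl
    rw [Finset.sum_range_zero] at hstop
    exact hstop.not_gt (by positivity)
  obtain rfl : V = bregmanDiv d Gd := funext₂ hV
  have hdecrease : ∀ i ∈ Finset.range N, ε ^ 2 / 2 * (1 / M i ^ 2) <
      bregmanDiv d Gd (x i) xstar - bregmanDiv d Gd (x (i + 1)) xstar := by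
    intro i hi
    rw [Finset.mem_range] at hi
    have hgap : ε < ⟪v i, x i - xstar⟫ := by
      have := hnonprod i hi (hJ i hi) xstar hxstarX
      rw [← neg_sub, inner_neg_right] at this
      linarith [hJ i hi]
    have hmin := hstep i hi
    rw [hh, hM] at hmin
    rw [hM]
    exact sq_div_two_mul_lt_bregmanDiv_sub hXcv (fun u _ => hd u) hstrong hε (hvne i hi) hgap
      (hxX i) hxstarX (hxX (i + 1)) hmin
  have hsum := Finset.sum_lt_sum_of_nonempty hN hdecrease
  rw [← Finset.mul_sum, Finset.sum_range_sub'] at hsum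
  have hstart := bregmanDiv_le_sub_of_isMinOn (hd (x 0)) hx0 hXcv (hxX 0) hxstarX
  have hend := sq_norm_sub_div_two_le_bregmanDiv hXcv (fun u _ => hd u) hstrong (hxX N) hxstarX
  rw [div_le_iff₀ (by positivity)] at hstop
  nlinarith [sq_nonneg ‖xstar - x N‖]

/-- nonemptiness of the set of productive steps.
Under the setting of the adaptive constrained Mirror Descent algorithm with stopping
condition `∑_{i<N} 1 / M i ^ 2 ≥ 2 Θ₀² / ε²`, the set `I` of productive steps
(those `i < N` with `g (x i) ≤ ε`) is nonempty: for every non-productive index one has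
`g (x i) - g xstar ≥ g (x i) > ε`, and the resulting strict inequality
`∑_{i∈I} h i (f x̄ - f xstar) < ε ∑_{i∈I} h i` forces `I ≠ ∅`. -/
theorem adaptive_md_productive_steps_nonempty
    {E : Type*} [NormedAddCommGroup E] [InnerProductSpace ℝ E] [CompleteSpace E]
    (X : Set E) (hXcl : IsClosed X) (hXcv : Convex ℝ X)
    (f g : E → ℝ) (hf : ConvexOn ℝ X f) (hg : ConvexOn ℝ X g)
    (xstar : E) (hxstarX : xstar ∈ X) (hxstarg : g xstar ≤ 0)
    (hxstaropt : ∀ y ∈ X, g y ≤ 0 → f xstar ≤ f y)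
    (d : E → ℝ) (Gd : E → E)
    (hd : ∀ x, HasGradientAt d (Gd x) x) (hGd : Continuous Gd)
    (hstrong : ∀ x ∈ X, ∀ y ∈ X, ‖x - y‖ ^ 2 ≤ ⟪Gd x - Gd y, x - y⟫)
    (V : E → E → ℝ) (hV : ∀ x y, V x y = d y - d x - ⟪Gd x, y - x⟫)
    (Θ₀ : ℝ) (hΘpos : 0 < Θ₀) (hΘ : d xstar ≤ Θ₀ ^ 2)
    (ε : ℝ) (hε : 0 < ε) (N : ℕ)
    (x : ℕ → E) (hxX : ∀ i, x i ∈ X)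
    (hx0 : IsMinOn d X (x 0)) (hd0 : 0 ≤ d (x 0))
    (v : ℕ → E) (M h : ℕ → ℝ)
    (hM : ∀ i, M i = ‖v i‖) (hh : ∀ i, h i = ε / M i ^ 2)
    (hvne : ∀ i < N, v i ≠ 0)
    (hprod : ∀ i < N, g (x i) ≤ ε → ∀ y ∈ X, f (x i) + ⟪v i, y - x i⟫ ≤ f y)
    (hnonprod : ∀ i < N, ε < g (x i) → ∀ y ∈ X, g (x i) + ⟪v i, y - x i⟫ ≤ g y)
    (hstep : ∀ i < N,
      IsMinOn (fun u => ⟪h i • v i, u⟫ + V (x i) u) X (x (i + 1)))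
    (hstop : 2 * Θ₀ ^ 2 / ε ^ 2 ≤ ∑ i ∈ Finset.range N, 1 / M i ^ 2) :
    ((Finset.range N).filter fun i => g (x i) ≤ ε).Nonempty :=
  adaptive_md_productive_steps_nonempty_general X hXcv g xstar hxstarX hxstarg d Gd hd hstrong V hV
    Θ₀ hΘpos hΘ ε hε N x hxX hx0 hd0 v M h hM hh hvne hnonprod hstep hstop
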